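/- Let A be the (n+1)-dimensional n-ary algebra of type (D_r) (3 ≤ r ≤ n+1) over a field F, and φ a δ-derivation with matrix entries β_{ij}. If δ = -1, then for i, j ≤ r with i ≠ j one has β_{ij} = (-1)^{i-j} β_{ji}, and Σ_{j=1}^{n+1} β_{jj} = 0. -/

import Mathlib

/-!
For `i` in the top block `e_i = [e_1, …, ê_i, …, e_{n+1}]`, so `φ e_i = -∑_{m ≠ i} [… φ e_m …]`
with `φ e_m` in the slot of `e_m`. Expanding `φ e_m = ∑_j β_{mj} e_j`, only `j = m` and `j = i`
survive: the first gives `β_{mm} e_i`, the second puts `e_i` in the slot of `e_m`, and reordering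
turns that bracket into `-(-1)^{i+m} [… ê_m …]`. Adding the term `m = i`, whose two parts cancel,
`φ e_i = ∑_j (-1)^{i+j} β_{ji} [… ê_j …] - (∑_j β_{jj}) e_i`.
Its `j`-th coordinate is `β_{ij} = (-1)^{i+j} β_{ji}`; its `i`-th reads `β_{ii} = β_{ii} - ∑_j β_{jj}`.
-/

open Function

namespace AlternatingMap

variable {R M N : Type*} [CommRing R] [AddCommGroup M] [Module R M] [AddCommGroup N] [Module R N]
  {n : ℕ}

theorem map_update_comp_succAbove_self (f : M [⋀^Fin n]→ₗ[R] N) (v : Fin (n + 1) → M)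
    (i : Fin (n + 1)) (k : Fin n) :
    f (update (v ∘ i.succAbove) k (v i)) =
      -((-1 : R) ^ ((i : ℕ) + i.succAbove k) • f (v ∘ (i.succAbove k).succAbove)) := by
  set m := i.succAbove k
  have hm : i ≠ m := (i.succAbove_ne k).symm
  -- Both sides come from deleting one of the two copies of `v i` in `update v m (v i)`.
  have key := neg_one_pow_smul_map_removeNth_add_eq_zero_of_eq f
    (v := update v m (v i)) (by rw [update_of_ne hm, update_self]) hm
  unfold Fin.removeNth at key
  rw [update_comp_eq_of_injective' v Fin.succAbove_right_injective,
    show (fun j ↦ update v m (v i) (m.succAbove j)) = v ∘ m.succAbove from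
      update_comp_eq_of_forall_ne v _ m.succAbove_ne] at key
  have := congrArg ((-1 : ℤ) ^ (i : ℕ) • ·) key
  simp only [smul_add, smul_smul, ← pow_add, smul_zero, ← two_mul, pow_mul, neg_one_sq, one_pow,
    one_smul] at this
  rw [← Int.cast_smul_eq_zsmul R] at this
  push_cast at this
  exact eq_neg_of_add_eq_zero_left this

theorem map_update_comp_succAbove_sum (f : M [⋀^Fin n]→ₗ[R] N) (v : Fin (n + 1) → M)
    (i : Fin (n + 1)) (k : Fin n) (c : Fin (n + 1) → R) :
    f (update (v ∘ i.succAbove) k (∑ j, c j • v j)) =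
      c (i.succAbove k) • f (v ∘ i.succAbove) -
        ((-1) ^ ((i : ℕ) + i.succAbove k) * c i) • f (v ∘ (i.succAbove k).succAbove) := by
  have h_other : ∀ l ≠ k, f (update (v ∘ i.succAbove) k (v (i.succAbove l))) = 0 := fun l hl ↦
    f.map_eq_zero_of_eq _ (i := k) (j := l) (by simp [update_of_ne hl]) hl.symm
  rw [Fin.sum_univ_succAbove _ i, f.map_update_add, f.map_update_sum,
    Finset.sum_eq_single k (fun l _ hl ↦ by rw [f.map_update_smul, h_other l hl, smul_zero])
      (by simp), f.map_update_smul, f.map_update_smul, map_update_comp_succAbove_self,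
    (update_eq_self_iff (f := v ∘ i.succAbove) (b := v (i.succAbove k))).2 rfl, smul_neg,
    smul_smul, mul_comm, neg_add_eq_sub]

theorem sum_map_update_basis_comp_succAbove (f : M [⋀^Fin n]→ₗ[R] N)
    (b : Module.Basis (Fin (n + 1)) R M) (φ : M →ₗ[R] M) (i : Fin (n + 1)) :
    ∑ k, f (update (b ∘ i.succAbove) k (φ ((b ∘ i.succAbove) k))) =
      (∑ j, b.repr (φ (b j)) j) • f (b ∘ i.succAbove) -
        ∑ j : Fin (n + 1), ((-1 : R) ^ ((i : ℕ) + (j : ℕ)) * b.repr (φ (b j)) i) •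
          f (b ∘ j.succAbove) := by
  have expand (k : Fin n) : f (update (b ∘ i.succAbove) k (φ ((b ∘ i.succAbove) k))) =
      b.repr (φ (b (i.succAbove k))) (i.succAbove k) • f (b ∘ i.succAbove) -
        ((-1 : R) ^ ((i : ℕ) + (i.succAbove k : ℕ)) * b.repr (φ (b (i.succAbove k))) i) •
          f (b ∘ (i.succAbove k).succAbove) := by
    simpa only [b.sum_repr, comp_apply] using
      map_update_comp_succAbove_sum f b i k (b.repr (φ (b (i.succAbove k))))
  rw [Finset.sum_congr rfl fun k _ ↦ expand k, Finset.sum_sub_distrib, ← Finset.sum_smul,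
    Fin.sum_univ_succAbove (fun j ↦ b.repr (φ (b j)) j) i,
    Fin.sum_univ_succAbove (fun j ↦ ((-1 : R) ^ ((i : ℕ) + (j : ℕ)) * b.repr (φ (b j)) i) •
      f (b ∘ j.succAbove)) i, Even.neg_one_pow ⟨i, rfl⟩]
  module

end AlternatingMap

section DeltaDerivation

variable {R M : Type*} [CommRing R] [AddCommGroup M] [Module R M] {n : ℕ}

def IsDeltaDerivation (br : M [⋀^Fin n]→ₗ[R] M) (δ : R) (φ : M →ₗ[R] M) : Prop :=
  ∀ x : Fin n → M, φ (br x) = δ • ∑ i, br (update x i (φ (x i)))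

def IsTypeD (r : ℕ) (b : Module.Basis (Fin (n + 1)) R M) (br : M [⋀^Fin n]→ₗ[R] M) : Prop :=
  ∀ i : Fin (n + 1), br (b ∘ i.succAbove) = if (i : ℕ) < r then b i else 0

variable {r : ℕ} {b : Module.Basis (Fin (n + 1)) R M} {br : M [⋀^Fin n]→ₗ[R] M}

theorem repr_sum_smul_comp_succAbove
    (hbr : IsTypeD r b br)
    (a : Fin (n + 1) → R) {c : Fin (n + 1)} (hc : (c : ℕ) < r) :
    b.repr (∑ j, a j • br (b ∘ j.succAbove)) c = a c := by
  have hcoord (j : Fin (n + 1)) : b.repr (br (b ∘ j.succAbove)) c = if j = c then 1 else 0 := by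
    rw [hbr]
    split_ifs <;> simp_all
  simp [Finsupp.finsetSum_apply, hcoord]

namespace IsDeltaDerivation

variable {φ : M →ₗ[R] M}

theorem apply_basis_of_lt (hφ : IsDeltaDerivation br (-1) φ)
    (hbr : IsTypeD r b br)
    {i : Fin (n + 1)} (hi : (i : ℕ) < r) :
    φ (b i) = ∑ j : Fin (n + 1), ((-1 : R) ^ ((i : ℕ) + (j : ℕ)) * b.repr (φ (b j)) i) •
        br (b ∘ j.succAbove) - (∑ j, b.repr (φ (b j)) j) • b i := by
  have h := hφ (b ∘ i.succAbove)
  rw [AlternatingMap.sum_map_update_basis_comp_succAbove, hbr i, if_pos hi] at h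
  rw [h, neg_one_smul, neg_sub]

theorem repr_apply_basis_of_ne (hφ : IsDeltaDerivation br (-1) φ)
    (hbr : IsTypeD r b br)
    {i j : Fin (n + 1)} (hi : (i : ℕ) < r) (hj : (j : ℕ) < r) (hij : i ≠ j) :
    b.repr (φ (b i)) j = (-1 : R) ^ ((i : ℕ) + (j : ℕ)) * b.repr (φ (b j)) i := by
  rw [hφ.apply_basis_of_lt hbr hi, map_sub, Finsupp.sub_apply,
    repr_sum_smul_comp_succAbove hbr _ hj]
  simp [hij]

theorem trace_eq_zero (hφ : IsDeltaDerivation br (-1) φ)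
    (hbr : IsTypeD r b br)
    (hr : 0 < r) : ∑ j, b.repr (φ (b j)) j = 0 := by
  have h0 : ((0 : Fin (n + 1)) : ℕ) < r := hr
  have h := congrArg (b.repr · 0) (hφ.apply_basis_of_lt hbr h0)
  rw [map_sub, Finsupp.sub_apply, repr_sum_smul_comp_succAbove hbr _ h0, map_smul,
    Finsupp.smul_apply, b.repr_self, Finsupp.single_eq_same, Fin.val_zero, pow_zero, one_mul,
    smul_eq_mul, mul_one] at h
  exact sub_eq_self.mp h.symm

end IsDeltaDerivation

end DeltaDerivation

theorem antiderivation_Dr_matrix_general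
    {F A : Type*} [Field F] [AddCommGroup A] [Module F A]
    {n r : ℕ} (hr3 : 3 ≤ r)
    (b : Module.Basis (Fin (n + 1)) F A)
    (br : AlternatingMap F A A (Fin n))
    (hbr : ∀ i : Fin (n + 1),
      br (b ∘ i.succAbove) = if (i : ℕ) < r then b i else 0)
    (φ : A →ₗ[F] A)
    (hφ : ∀ x : Fin n → A,
      φ (br x) = (-1 : F) • ∑ i, br (Function.update x i (φ (x i)))) :
    (∀ i j : Fin (n + 1), (i : ℕ) < r → (j : ℕ) < r → i ≠ j →
      b.repr (φ (b i)) j = (-1 : F) ^ ((i : ℕ) + (j : ℕ)) * b.repr (φ (b j)) i) ∧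
    ∑ j : Fin (n + 1), b.repr (φ (b j)) j = 0 :=
  ⟨fun _ _ hi hj hij ↦ IsDeltaDerivation.repr_apply_basis_of_ne hφ hbr hi hj hij,
    IsDeltaDerivation.trace_eq_zero hφ hbr (by omega)⟩

/-- Type `(D_r)`, `δ = -1`: for `i ≠ j` in the top block, `β_{ij} = (-1)^{i-j} β_{ji}`,
and the trace `Σ_j β_{jj}` vanishes. -/
theorem antiderivation_Dr_matrix
    {F A : Type*} [Field F] [AddCommGroup A] [Module F A]
    {n r : ℕ} (hr3 : 3 ≤ r) (hrn : r ≤ n + 1)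
    (b : Module.Basis (Fin (n + 1)) F A)
    (br : AlternatingMap F A A (Fin n))
    (hbr : ∀ i : Fin (n + 1),
      br (b ∘ i.succAbove) = if (i : ℕ) < r then b i else 0)
    (φ : A →ₗ[F] A)
    (hφ : ∀ x : Fin n → A,
      φ (br x) = (-1 : F) • ∑ i, br (Function.update x i (φ (x i)))) :
    (∀ i j : Fin (n + 1), (i : ℕ) < r → (j : ℕ) < r → i ≠ j →
      b.repr (φ (b i)) j = (-1 : F) ^ ((i : ℕ) + (j : ℕ)) * b.repr (φ (b j)) i) ∧
    ∑ j : Fin (n + 1), b.repr (φ (b j)) j = 0 :=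
  antiderivation_Dr_matrix_general hr3 b br hbr φ hφ
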